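/- Let T be a Marco–Martens map on the probability space (X, ℬ, m) with Marco–Martens cover {X_j}_{j≥0}, let l_B be a Banach limit, and let μ be the set function defined by μ(A) := Σ_{j=0}^∞ l_B((m_n(A ∩ Y_j))_{n≥1}) for measurable A ⊆ X. Then μ is T-invariant: μ(T⁻¹(A)) = μ(A) for every measurable set A ⊆ X. -/

import Mathlib

open MeasureTheory Set Filter

/-- `MMY Xs j = Y_j := X_j \ ⋃_{i < j} X_i`. -/
def MMY {X : Type*} (Xs : ℕ → Set X) (j : ℕ) : Set X := Xs j \ ⋃ i ∈ Set.Iio j, Xs i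

/-- `T` is a Marco–Martens map on the probability space `(X, ℬ, m)` with Marco–Martens cover
`(X_j)_{j ≥ 0}` and constants `(K_j)_{j ≥ 0}` (condition (4)): `T` is measurable, maps
measurable sets to measurable sets, `m` is quasi-invariant under `T`, and conditions
(2)–(6) of the definition hold. -/
structure MarcoMartens {X : Type*} [MeasurableSpace X] (m : Measure X) (T : X → X)
    (Xs : ℕ → Set X) (K : ℕ → ℝ) : Prop where
  measurable_T : Measurable T
  image_meas : ∀ A : Set X, MeasurableSet A → MeasurableSet (T '' A)
  quasi_invariant : m.map T ≪ m
  meas_Xs : ∀ j, MeasurableSet (Xs j)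
  cover : m (univ \ ⋃ n, Xs n) = 0
  cond3 : ∀ i j : ℕ, ∃ k : ℕ, 0 < m (Xs i ∩ T^[k] ⁻¹' Xs j)
  one_le_K : ∀ j, 1 ≤ K j
  cond4 : ∀ j : ℕ, ∀ A B : Set X, MeasurableSet A → MeasurableSet B →
    A ⊆ Xs j → B ⊆ Xs j → ∀ n : ℕ,
    m (T^[n] ⁻¹' A) * m B ≤ ENNReal.ofReal (K j) * (m A * m (T^[n] ⁻¹' B))
  cond5 : ∑' n : ℕ, m (T^[n] ⁻¹' Xs 0) = ⊤
  cond6 : Tendsto (fun l : ℕ => m (T '' ⋃ j ∈ Set.Ici l, MMY Xs j)) atTop (nhds 0)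

/-- `mseq m T Xs A n = m_n(A) := (Σ_{k=0}^n m(T^{-k}A)) / (Σ_{k=0}^n m(T^{-k}X_0))`. -/
noncomputable def mseq {X : Type*} [MeasurableSpace X] (m : Measure X) (T : X → X)
    (Xs : ℕ → Set X) (A : Set X) (n : ℕ) : ℝ :=
  (∑ k ∈ Finset.range (n + 1), (m (T^[k] ⁻¹' A)).toReal) /
    (∑ k ∈ Finset.range (n + 1), (m (T^[k] ⁻¹' Xs 0)).toReal)

/-- `lB` is a Banach limit: a positive, normalized, shift-invariant linear functional on the
space of bounded real sequences. -/
structure IsBanachLimit (lB : (ℕ → ℝ) → ℝ) : Prop where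
  map_add : ∀ x y : ℕ → ℝ, (∃ C, ∀ n, |x n| ≤ C) → (∃ C, ∀ n, |y n| ≤ C) →
    lB (x + y) = lB x + lB y
  map_smul : ∀ (c : ℝ) (x : ℕ → ℝ), (∃ C, ∀ n, |x n| ≤ C) → lB (c • x) = c * lB x
  nonneg : ∀ x : ℕ → ℝ, (∃ C, ∀ n, |x n| ≤ C) → (∀ n, 0 ≤ x n) → 0 ≤ lB x
  map_one : lB (fun _ => 1) = 1
  shift_invariant : ∀ x : ℕ → ℝ, (∃ C, ∀ n, |x n| ≤ C) → lB (fun n => x (n + 1)) = lB x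

/-- `MMmu m T Xs lB A = μ(A) := Σ_{j=0}^∞ lB((m_n(A ∩ Y_j))_{n ≥ 1})`. -/
noncomputable def MMmu {X : Type*} [MeasurableSpace X] (m : Measure X) (T : X → X)
    (Xs : ℕ → Set X) (lB : (ℕ → ℝ) → ℝ) (A : Set X) : ℝ :=
  ∑' j : ℕ, lB (fun n => mseq m T Xs (A ∩ MMY Xs j) (n + 1))

/-!
Write `L(E)` for the Banach limit of `(m_{n+1}(E))_n`, so that `μ(A) = Σ_j L(A ∩ Y_j)`. For
measurable `G ⊆ X_j`, conditions (3) and (4) give `m_n(G) ≤ C_j m(G)` uniformly in `n`; hence all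
sequences involved are bounded, and `L` is finitely additive and dominated by `C_j m` on `X_j`.

* `L(T⁻¹G) = L(G)` for `G ⊆ X_j`, because `|m_n(T⁻¹G) - m_n(G)| ≤ 1 / Σ_{k ≤ n} m(T^{-k}X_0)`,
  which tends to `0` by (5).
* `L` is countably additive along the partition `(Y_i)` of `T⁻¹G` (the tails are small by (6))
  and along the partition `(T⁻¹Y_j)` of a subset of `X_i` (the tails are small by continuity of
  `m` from above).
* So `μ(T⁻¹A) = Σ_i Σ_j L(T⁻¹A ∩ Y_i ∩ T⁻¹Y_j)`, and exchanging the order of summation of this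
  non-negative double series gives `Σ_j L(T⁻¹(A ∩ Y_j)) = Σ_j L(A ∩ Y_j) = μ(A)`.
-/

open Function
open scoped Topology

def BoundedSeq (x : ℕ → ℝ) : Prop := ∃ C, ∀ n, |x n| ≤ C

namespace BoundedSeq

variable {x y : ℕ → ℝ}

lemma const (c : ℝ) : BoundedSeq fun _ => c := ⟨|c|, fun _ => le_rfl⟩

lemma add (hx : BoundedSeq x) (hy : BoundedSeq y) : BoundedSeq (x + y) := by
  obtain ⟨C, hC⟩ := hx
  obtain ⟨D, hD⟩ := hy
  exact ⟨C + D, fun n => (abs_add_le _ _).trans (add_le_add (hC n) (hD n))⟩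

lemma neg (hx : BoundedSeq x) : BoundedSeq (-x) := by
  simpa [BoundedSeq] using hx

lemma sub (hx : BoundedSeq x) (hy : BoundedSeq y) : BoundedSeq (x - y) := by
  simpa only [sub_eq_add_neg] using hx.add hy.neg

lemma of_nonneg_of_le (hy : BoundedSeq y) (h0 : ∀ n, 0 ≤ x n) (hle : ∀ n, x n ≤ y n) :
    BoundedSeq x := by
  obtain ⟨C, hC⟩ := hy
  exact ⟨C, fun n => (abs_of_nonneg (h0 n)).trans_le ((hle n).trans ((le_abs_self _).trans (hC n)))⟩

lemma comp_add (hx : BoundedSeq x) (k : ℕ) : BoundedSeq fun n => x (n + k) := by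
  obtain ⟨C, hC⟩ := hx
  exact ⟨C, fun n => hC (n + k)⟩

end BoundedSeq

namespace IsBanachLimit

variable {lB : (ℕ → ℝ) → ℝ} (h : IsBanachLimit lB) {x y : ℕ → ℝ}
include h

lemma map_const (c : ℝ) : lB (fun _ => c) = c := by
  have hc : (c • fun _ : ℕ => (1 : ℝ)) = fun _ => c := funext fun _ => mul_one c
  simpa [hc, h.map_one] using h.map_smul c (fun _ => 1) (BoundedSeq.const 1)

lemma map_sub (hx : BoundedSeq x) (hy : BoundedSeq y) : lB (x - y) = lB x - lB y := by
  have hneg : lB (-y) = -lB y := by simpa using h.map_smul (-1) y hy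
  rw [sub_eq_add_neg, h.map_add x (-y) hx hy.neg, hneg, sub_eq_add_neg]

lemma mono (hx : BoundedSeq x) (hy : BoundedSeq y) (hle : ∀ n, x n ≤ y n) : lB x ≤ lB y := by
  have := h.nonneg (y - x) (hy.sub hx) fun n => sub_nonneg.2 (hle n)
  linarith [h.map_sub hy hx]

lemma abs_map_le {c : ℝ} (hc : ∀ n, |x n| ≤ c) : |lB x| ≤ c := by
  have hx : BoundedSeq x := ⟨c, hc⟩
  have hle := h.mono hx (.const c) fun n => (_root_.abs_le.1 (hc n)).2
  have hge := h.mono (.const (-c)) hx fun n => (_root_.abs_le.1 (hc n)).1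
  rw [h.map_const] at hle hge
  exact _root_.abs_le.2 ⟨hge, hle⟩

lemma map_comp_add (hx : BoundedSeq x) (k : ℕ) : lB (fun n => x (n + k)) = lB x := by
  induction k with
  | zero => rfl
  | succ k ih =>
    rw [← ih, ← h.shift_invariant _ (hx.comp_add k)]
    simp only [Nat.add_right_comm _ 1 k, add_assoc]

lemma eq_zero_of_tendsto (hx : BoundedSeq x) (hlim : Tendsto x atTop (𝓝 0)) : lB x = 0 := by
  refine abs_eq_zero.1 (le_antisymm (le_of_forall_pos_le_add fun ε hε => ?_) (abs_nonneg _))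
  obtain ⟨k, hk⟩ := Metric.tendsto_atTop.1 hlim ε hε
  rw [← h.map_comp_add hx k, zero_add]
  refine h.abs_map_le fun n => ?_
  simpa [Real.dist_eq] using (hk (n + k) (Nat.le_add_left k n)).le

lemma eq_of_tendsto_sub (hx : BoundedSeq x) (hy : BoundedSeq y)
    (hlim : Tendsto (x - y) atTop (𝓝 0)) : lB x = lB y := by
  linarith [h.map_sub hx hy, h.eq_zero_of_tendsto (hx.sub hy) hlim]

end IsBanachLimit

theorem hasSum_inter_of_additive {X : Type*} [MeasurableSpace X] (ν : Set X → ℝ)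
    {Q : Set X} {Z : ℕ → Set X} (hQ : MeasurableSet Q) (hZ : ∀ k, MeasurableSet (Z k))
    (hdisj : Pairwise (Disjoint on Z))
    (hadd : ∀ E F, E ⊆ Q → F ⊆ Q → MeasurableSet F → Disjoint E F → ν (E ∪ F) = ν E + ν F)
    (hnonneg : ∀ k, 0 ≤ ν (Q ∩ Z k))
    (htail : Tendsto (fun M => ν (Q \ ⋃ k < M, Z k)) atTop (𝓝 0)) :
    HasSum (fun k => ν (Q ∩ Z k)) (ν Q) := by
  have hsplit : ∀ M, ν Q = ∑ k ∈ Finset.range M, ν (Q ∩ Z k) + ν (Q \ ⋃ k < M, Z k) := by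
    intro M
    induction M with
    | zero => simp
    | succ M ih =>
      have hunion : Q \ ⋃ k < M, Z k = (Q ∩ Z M) ∪ (Q \ ⋃ k < M + 1, Z k) := by
        ext x
        simp only [Set.mem_sdiff, mem_iUnion, mem_inter_iff, mem_union, Nat.lt_succ_iff_lt_or_eq]
        constructor
        · rintro ⟨hxQ, hx⟩
          by_cases hxM : x ∈ Z M
          · exact Or.inl ⟨hxQ, hxM⟩
          · refine Or.inr ⟨hxQ, ?_⟩
            rintro ⟨k, hk | rfl, hxk⟩
            exacts [hx ⟨k, hk, hxk⟩, hxM hxk]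
        · rintro (⟨hxQ, hxM⟩ | ⟨hxQ, hx⟩)
          · exact ⟨hxQ, fun ⟨k, hk, hxk⟩ => (hdisj hk.ne).ne_of_mem hxk hxM rfl⟩
          · exact ⟨hxQ, fun ⟨k, hk, hxk⟩ => hx ⟨k, Or.inl hk, hxk⟩⟩
      have hd : Disjoint (Q ∩ Z M) (Q \ ⋃ k < M + 1, Z k) :=
        disjoint_left.2 fun x hx hx' => hx'.2 (mem_biUnion (Nat.lt_succ_self M) hx.2)
      rw [ih, hunion, hadd _ _ inter_subset_left sdiff_subset
        (hQ.diff (.iUnion fun k => .iUnion fun _ => hZ k)) hd, Finset.sum_range_succ]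
      ring
  refine (hasSum_iff_tendsto_nat_of_nonneg hnonneg _).2 ?_
  have : Tendsto (fun M => ν Q - ν (Q \ ⋃ k < M, Z k)) atTop (𝓝 (ν Q)) := by
    simpa using tendsto_const_nhds.sub htail
  exact this.congr fun M => by rw [hsplit M]; ring

lemma tsum_eq_toReal_tsum_ofReal {γ : Type*} {f : γ → ℝ} (hf : ∀ k, 0 ≤ f k) :
    ∑' k, f k = (∑' k, ENNReal.ofReal (f k)).toReal := by
  rw [ENNReal.tsum_toReal_eq fun _ => ENNReal.ofReal_ne_top]
  exact tsum_congr fun k => (ENNReal.toReal_ofReal (hf k)).symm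

theorem tsum_eq_tsum_of_hasSum_row_col {α β : Type*} {a : α → β → ℝ} {r : α → ℝ} {c : β → ℝ}
    (h0 : ∀ i j, 0 ≤ a i j) (hr : ∀ i, HasSum (a i) (r i))
    (hc : ∀ j, HasSum (fun i => a i j) (c j)) :
    ∑' i, r i = ∑' j, c j := by
  have hr' : ∀ i, ENNReal.ofReal (r i) = ∑' j, ENNReal.ofReal (a i j) := fun i => by
    rw [← (hr i).tsum_eq, ENNReal.ofReal_tsum_of_nonneg (h0 i) (hr i).summable]
  have hc' : ∀ j, ENNReal.ofReal (c j) = ∑' i, ENNReal.ofReal (a i j) := fun j => by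
    rw [← (hc j).tsum_eq, ENNReal.ofReal_tsum_of_nonneg (h0 · j) (hc j).summable]
  rw [tsum_eq_toReal_tsum_ofReal fun i => (hr i).nonneg (h0 i),
    tsum_eq_toReal_tsum_ofReal fun j => (hc j).nonneg (h0 · j)]
  simp_rw [hr', hc']
  rw [ENNReal.tsum_comm]

section PreimageSum

variable {X : Type*} [MeasurableSpace X]

noncomputable def preimageSum (m : Measure X) (T : X → X) (A : Set X) (n : ℕ) : ℝ :=
  ∑ k ∈ Finset.range (n + 1), m.real (T^[k] ⁻¹' A)

lemma mseq_eq_div (m : Measure X) (T : X → X) (Xs : ℕ → Set X) (A : Set X) (n : ℕ) :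
    mseq m T Xs A n = preimageSum m T A n / preimageSum m T (Xs 0) n := rfl

variable {m : Measure X} {T : X → X} {A B : Set X} {n : ℕ}

lemma preimageSum_nonneg : 0 ≤ preimageSum m T A n :=
  Finset.sum_nonneg fun _ _ => measureReal_nonneg

lemma measureReal_le_preimageSum : m.real A ≤ preimageSum m T A n :=
  Finset.single_le_sum (f := fun k => m.real (T^[k] ⁻¹' A)) (fun _ _ => measureReal_nonneg)
    (Finset.mem_range.2 n.succ_pos)

lemma preimageSum_mono_ae [IsFiniteMeasure m] (hT : Measure.QuasiMeasurePreserving T m m)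
    (h : A ≤ᵐ[m] B) : preimageSum m T A n ≤ preimageSum m T B n :=
  Finset.sum_le_sum fun k _ =>
    ENNReal.toReal_mono (measure_ne_top m _) (measure_mono_ae ((hT.iterate k).preimage_mono_ae h))

lemma preimageSum_union [IsFiniteMeasure m] (hT : Measurable T) (hB : MeasurableSet B)
    (hAB : Disjoint A B) :
    preimageSum m T (A ∪ B) n = preimageSum m T A n + preimageSum m T B n := by
  rw [preimageSum, preimageSum, preimageSum, ← Finset.sum_add_distrib]
  refine Finset.sum_congr rfl fun k _ => ?_
  rw [preimage_union, measureReal_union (hAB.preimage _) ((hT.iterate k) hB)]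

lemma preimageSum_preimage_add :
    preimageSum m T (T ⁻¹' A) n + m.real A = preimageSum m T A n + m.real (T^[n + 1] ⁻¹' A) := by
  have hshift : ∀ k, T^[k] ⁻¹' (T ⁻¹' A) = T^[k + 1] ⁻¹' A := fun k => by
    rw [Function.iterate_succ', preimage_comp]
  simp only [preimageSum, hshift]
  rw [← Finset.sum_range_succ (fun k => m.real (T^[k] ⁻¹' A))]
  exact (Finset.sum_range_succ' (fun k => m.real (T^[k] ⁻¹' A)) _).symm

lemma preimageSum_preimage_le [IsProbabilityMeasure m] :
    preimageSum m T (T ⁻¹' A) n ≤ preimageSum m T A n + 1 := by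
  linarith [preimageSum_preimage_add (m := m) (T := T) (A := A) (n := n),
    measureReal_le_one (μ := m) (s := T^[n + 1] ⁻¹' A), measureReal_nonneg (μ := m) (s := A)]

lemma preimageSum_iterate_preimage_le [IsProbabilityMeasure m] (r : ℕ) :
    preimageSum m T (T^[r] ⁻¹' A) n ≤ preimageSum m T A n + r := by
  induction r with
  | zero => simp
  | succ r ih =>
    rw [Function.iterate_succ, preimage_comp]
    push_cast
    linarith [preimageSum_preimage_le (m := m) (T := T) (A := T^[r] ⁻¹' A) (n := n)]

lemma tendsto_preimageSum_atTop [IsFiniteMeasure m] (h : ∑' k, m (T^[k] ⁻¹' A) = ⊤) :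
    Tendsto (preimageSum m T A) atTop atTop := by
  have hns : ¬Summable fun k => m.real (T^[k] ⁻¹' A) := fun hs => by
    have := ENNReal.ofReal_tsum_of_nonneg (fun _ => measureReal_nonneg) hs
    rw [tsum_congr fun k => ofReal_measureReal (measure_ne_top m (T^[k] ⁻¹' A)), h] at this
    exact ENNReal.ofReal_ne_top this
  exact ((not_summable_iff_tendsto_nat_atTop_of_nonneg fun _ => measureReal_nonneg).1 hns).comp
    (tendsto_add_atTop_nat 1)

end PreimageSum

section Mseq

variable {X : Type*} [MeasurableSpace X] {m : Measure X} {T : X → X} {Xs : ℕ → Set X}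
  {A B : Set X} {n : ℕ}

lemma mseq_nonneg : 0 ≤ mseq m T Xs A n :=
  div_nonneg preimageSum_nonneg preimageSum_nonneg

lemma mseq_mono_ae [IsFiniteMeasure m] (hT : Measure.QuasiMeasurePreserving T m m)
    (h : A ≤ᵐ[m] B) : mseq m T Xs A n ≤ mseq m T Xs B n :=
  div_le_div_of_nonneg_right (preimageSum_mono_ae hT h) preimageSum_nonneg

lemma mseq_union [IsFiniteMeasure m] (hT : Measurable T) (hB : MeasurableSet B)
    (hAB : Disjoint A B) : mseq m T Xs (A ∪ B) n = mseq m T Xs A n + mseq m T Xs B n := by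
  rw [mseq_eq_div, preimageSum_union hT hB hAB, add_div]
  rfl

lemma abs_mseq_preimage_sub_le [IsProbabilityMeasure m] :
    |mseq m T Xs (T ⁻¹' A) n - mseq m T Xs A n| ≤ 1 / preimageSum m T (Xs 0) n := by
  rw [mseq_eq_div, mseq_eq_div, ← sub_div, abs_div, abs_of_nonneg preimageSum_nonneg]
  refine div_le_div_of_nonneg_right ?_ preimageSum_nonneg
  have hshift := preimageSum_preimage_add (m := m) (T := T) (A := A) (n := n)
  have h1 : m.real (T^[n + 1] ⁻¹' A) ≤ 1 := measureReal_le_one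
  have h2 : m.real A ≤ 1 := measureReal_le_one
  have h3 : 0 ≤ m.real (T^[n + 1] ⁻¹' A) := measureReal_nonneg
  have h4 : 0 ≤ m.real A := measureReal_nonneg
  exact abs_sub_le_iff.2 ⟨by linarith, by linarith⟩

lemma BoundedSeq.mseq_of_ae_le [IsFiniteMeasure m] (hT : Measure.QuasiMeasurePreserving T m m)
    (hB : BoundedSeq fun n => mseq m T Xs B (n + 1)) (h : A ≤ᵐ[m] B) :
    BoundedSeq fun n => mseq m T Xs A (n + 1) :=
  hB.of_nonneg_of_le (fun _ => mseq_nonneg) fun _ => mseq_mono_ae hT h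

end Mseq

noncomputable def mseqLim {X : Type*} [MeasurableSpace X] (m : Measure X) (T : X → X)
    (Xs : ℕ → Set X) (lB : (ℕ → ℝ) → ℝ) (E : Set X) : ℝ :=
  lB fun n => mseq m T Xs E (n + 1)

section MseqLim

variable {X : Type*} [MeasurableSpace X] {m : Measure X} {T : X → X}
  {Xs : ℕ → Set X} {lB : (ℕ → ℝ) → ℝ} {A B : Set X}

lemma MMmu_eq_tsum_mseqLim (A : Set X) :
    MMmu m T Xs lB A = ∑' j, mseqLim m T Xs lB (A ∩ MMY Xs j) := rfl

variable (hlB : IsBanachLimit lB)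
include hlB

lemma mseqLim_nonneg (hA : BoundedSeq fun n => mseq m T Xs A (n + 1)) :
    0 ≤ mseqLim m T Xs lB A :=
  hlB.nonneg _ hA fun _ => mseq_nonneg

variable [IsFiniteMeasure m]

lemma mseqLim_mono_ae (hT : Measure.QuasiMeasurePreserving T m m)
    (hB : BoundedSeq fun n => mseq m T Xs B (n + 1)) (h : A ≤ᵐ[m] B) :
    mseqLim m T Xs lB A ≤ mseqLim m T Xs lB B :=
  hlB.mono (hB.mseq_of_ae_le hT h) hB fun _ => mseq_mono_ae hT h

lemma mseqLim_union (hT : Measurable T) (hB : MeasurableSet B) (hAB : Disjoint A B)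
    (hAb : BoundedSeq fun n => mseq m T Xs A (n + 1))
    (hBb : BoundedSeq fun n => mseq m T Xs B (n + 1)) :
    mseqLim m T Xs lB (A ∪ B) = mseqLim m T Xs lB A + mseqLim m T Xs lB B := by
  rw [mseqLim, mseqLim, mseqLim, ← hlB.map_add _ _ hAb hBb]
  congr 1
  funext n
  exact mseq_union hT hB hAB

theorem hasSum_mseqLim_inter (hT : Measure.QuasiMeasurePreserving T m m) {Q : Set X}
    {Z : ℕ → Set X} (hQ : MeasurableSet Q) (hQb : BoundedSeq fun n => mseq m T Xs Q (n + 1))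
    (hZ : ∀ k, MeasurableSet (Z k)) (hdisj : Pairwise (Disjoint on Z))
    (htail : Tendsto (fun M => mseqLim m T Xs lB (Q \ ⋃ k < M, Z k)) atTop (𝓝 0)) :
    HasSum (fun k => mseqLim m T Xs lB (Q ∩ Z k)) (mseqLim m T Xs lB Q) := by
  have hsub : ∀ {E}, E ⊆ Q → BoundedSeq fun n => mseq m T Xs E (n + 1) := fun hE =>
    hQb.mseq_of_ae_le hT hE.eventuallyLE
  refine hasSum_inter_of_additive _ hQ hZ hdisj (fun E F hE hF hFm hEF => ?_)
    (fun k => mseqLim_nonneg hlB (hsub inter_subset_left)) htail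
  exact mseqLim_union hlB hT.measurable hFm hEF (hsub hE) (hsub hF)

end MseqLim

lemma MMY_eq_disjointed {X : Type*} (Xs : ℕ → Set X) : MMY Xs = disjointed Xs := by
  funext j
  rw [disjointed_eq_inter_compl, MMY, sdiff_eq, compl_iUnion₂]
  rfl

lemma MMY_subset {X : Type*} {Xs : ℕ → Set X} {j : ℕ} : MMY Xs j ⊆ Xs j :=
  sdiff_subset

lemma pairwise_disjoint_MMY {X : Type*} {Xs : ℕ → Set X} : Pairwise (Disjoint on MMY Xs) := by
  rw [MMY_eq_disjointed]
  exact disjoint_disjointed Xs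

namespace MarcoMartens

variable {X : Type*} [MeasurableSpace X] {m : Measure X} {T : X → X}
  {Xs : ℕ → Set X} {K : ℕ → ℝ} (hMM : MarcoMartens m T Xs K)
include hMM

lemma quasiMeasurePreserving : Measure.QuasiMeasurePreserving T m m :=
  ⟨hMM.measurable_T, hMM.quasi_invariant⟩

lemma measurableSet_MMY (j : ℕ) : MeasurableSet (MMY Xs j) := by
  rw [MMY_eq_disjointed]
  exact .disjointed hMM.meas_Xs j

lemma ae_mem_iUnion_MMY : ∀ᵐ x ∂m, x ∈ ⋃ j, MMY Xs j := by
  filter_upwards [measure_eq_zero_iff_ae_notMem.1 hMM.cover] with x hx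
  rw [MMY_eq_disjointed, iUnion_disjointed]
  simpa using hx

lemma K_nonneg (j : ℕ) : 0 ≤ K j :=
  zero_le_one.trans (hMM.one_le_K j)

variable [IsProbabilityMeasure m]

lemma measureReal_X0_pos : 0 < m.real (Xs 0) := by
  obtain ⟨k, hk⟩ := hMM.cond3 0 0
  exact ENNReal.toReal_pos (hk.trans_le (measure_mono inter_subset_left)).ne' (measure_ne_top m _)

lemma preimageSum_mul_measureReal_le {j n : ℕ} {A B : Set X} (hA : MeasurableSet A)
    (hB : MeasurableSet B) (hAj : A ⊆ Xs j) (hBj : B ⊆ Xs j) :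
    preimageSum m T A n * m.real B ≤ K j * m.real A * preimageSum m T B n := by
  rw [preimageSum, preimageSum, Finset.sum_mul, Finset.mul_sum]
  refine Finset.sum_le_sum fun k _ => ?_
  have h := ENNReal.toReal_mono (by finiteness) (hMM.cond4 j A B hA hB hAj hBj k)
  rw [ENNReal.toReal_mul, ENNReal.toReal_mul, ENNReal.toReal_mul,
    ENNReal.toReal_ofReal (hMM.K_nonneg j)] at h
  simpa only [Measure.real, mul_assoc] using h

/-- The constant is `K_j (1 + r / m(X_0)) / m(X_j ∩ T^{-r} X_0)`, for an `r` given by (3). -/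
lemma exists_mseq_le_mul_measureReal (j : ℕ) :
    ∃ C, ∀ G, MeasurableSet G → G ⊆ Xs j → ∀ n, mseq m T Xs G n ≤ C * m.real G := by
  obtain ⟨r, hr⟩ := hMM.cond3 j 0
  set W := Xs j ∩ T^[r] ⁻¹' Xs 0
  have hW : MeasurableSet W := (hMM.meas_Xs j).inter (hMM.measurable_T.iterate r (hMM.meas_Xs 0))
  have hw : 0 < m.real W := ENNReal.toReal_pos hr.ne' (measure_ne_top m _)
  have hd := hMM.measureReal_X0_pos
  refine ⟨K j * (1 + r / m.real (Xs 0)) / m.real W, fun G hG hGj n => ?_⟩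
  have hD : m.real (Xs 0) ≤ preimageSum m T (Xs 0) n := measureReal_le_preimageSum
  have hDpos : 0 < preimageSum m T (Xs 0) n := hd.trans_le hD
  have hKG : 0 ≤ K j * m.real G := mul_nonneg (hMM.K_nonneg j) measureReal_nonneg
  have hWD : preimageSum m T W n ≤ (1 + r / m.real (Xs 0)) * preimageSum m T (Xs 0) n := by
    have hrD : (r : ℝ) ≤ r / m.real (Xs 0) * preimageSum m T (Xs 0) n := by
      rw [div_mul_eq_mul_div, le_div_iff₀ hd]
      exact mul_le_mul_of_nonneg_left hD r.cast_nonneg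
    calc preimageSum m T W n ≤ preimageSum m T (T^[r] ⁻¹' Xs 0) n :=
          preimageSum_mono_ae hMM.quasiMeasurePreserving inter_subset_right.eventuallyLE
      _ ≤ preimageSum m T (Xs 0) n + r := preimageSum_iterate_preimage_le r
      _ ≤ _ := by linarith
  have key : preimageSum m T G n * m.real W
      ≤ K j * m.real G * ((1 + r / m.real (Xs 0)) * preimageSum m T (Xs 0) n) :=
    (hMM.preimageSum_mul_measureReal_le hG hW hGj inter_subset_left).trans
      (mul_le_mul_of_nonneg_left hWD hKG)
  rw [mseq_eq_div, div_le_iff₀ hDpos]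
  calc preimageSum m T G n = preimageSum m T G n * m.real W / m.real W :=
        (mul_div_cancel_right₀ _ hw.ne').symm
    _ ≤ K j * m.real G * ((1 + r / m.real (Xs 0)) * preimageSum m T (Xs 0) n) / m.real W :=
        div_le_div_of_nonneg_right key hw.le
    _ = _ := by ring

lemma boundedSeq_mseq {j : ℕ} {G : Set X} (hG : MeasurableSet G) (hGj : G ⊆ Xs j) :
    BoundedSeq fun n => mseq m T Xs G (n + 1) := by
  obtain ⟨C, hC⟩ := hMM.exists_mseq_le_mul_measureReal j
  refine (BoundedSeq.const |C|).of_nonneg_of_le (fun _ => mseq_nonneg) fun n => ?_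
  calc mseq m T Xs G (n + 1) ≤ C * m.real G := hC G hG hGj _
    _ ≤ |C| * m.real G := mul_le_mul_of_nonneg_right (le_abs_self C) measureReal_nonneg
    _ ≤ |C| := mul_le_of_le_one_right (abs_nonneg C) measureReal_le_one

lemma boundedSeq_mseq_preimage {j : ℕ} {G : Set X} (hG : MeasurableSet G) (hGj : G ⊆ Xs j) :
    BoundedSeq fun n => mseq m T Xs (T ⁻¹' G) (n + 1) := by
  refine ((hMM.boundedSeq_mseq hG hGj).add (.const (1 / m.real (Xs 0)))).of_nonneg_of_le
    (fun _ => mseq_nonneg) fun n => ?_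
  have hshift := (abs_le.1 (abs_mseq_preimage_sub_le (m := m) (T := T) (Xs := Xs) (A := G)
    (n := n + 1))).2
  have hD : 1 / preimageSum m T (Xs 0) (n + 1) ≤ 1 / m.real (Xs 0) :=
    one_div_le_one_div_of_le hMM.measureReal_X0_pos measureReal_le_preimageSum
  simp only [Pi.add_apply]
  linarith

variable {lB : (ℕ → ℝ) → ℝ} (hlB : IsBanachLimit lB)
include hlB

lemma mseqLim_preimage {j : ℕ} {G : Set X} (hG : MeasurableSet G) (hGj : G ⊆ Xs j) :
    mseqLim m T Xs lB (T ⁻¹' G) = mseqLim m T Xs lB G := by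
  refine hlB.eq_of_tendsto_sub (hMM.boundedSeq_mseq_preimage hG hGj) (hMM.boundedSeq_mseq hG hGj) ?_
  have hD : Tendsto (fun n => 1 / preimageSum m T (Xs 0) (n + 1)) atTop (𝓝 0) :=
    ((tendsto_preimageSum_atTop hMM.cond5).comp
      (tendsto_add_atTop_nat 1)).inv_tendsto_atTop.congr fun n => (one_div _).symm
  exact squeeze_zero_norm (fun n => abs_mseq_preimage_sub_le) hD

lemma exists_mseqLim_le_mul_measureReal (j : ℕ) :
    ∃ C, ∀ G, MeasurableSet G → G ⊆ Xs j → mseqLim m T Xs lB G ≤ C * m.real G := by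
  obtain ⟨C, hC⟩ := hMM.exists_mseq_le_mul_measureReal j
  refine ⟨C, fun G hG hGj => ?_⟩
  have := hlB.mono (hMM.boundedSeq_mseq hG hGj) (.const _) fun n => hC G hG hGj (n + 1)
  rwa [hlB.map_const] at this

theorem hasSum_mseqLim_preimage_inter_MMY {j : ℕ} {E : Set X} (hE : MeasurableSet E)
    (hEj : E ⊆ Xs j) :
    HasSum (fun i => mseqLim m T Xs lB (T ⁻¹' E ∩ MMY Xs i)) (mseqLim m T Xs lB (T ⁻¹' E)) := by
  obtain ⟨C, hC⟩ := hMM.exists_mseqLim_le_mul_measureReal hlB j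
  have hQb := hMM.boundedSeq_mseq_preimage hE hEj
  set G : ℕ → Set X := fun M => Xs j ∩ T '' ⋃ i ∈ Ici M, MMY Xs i
  have hG : ∀ M, MeasurableSet (G M) := fun M => (hMM.meas_Xs j).inter
    (hMM.image_meas _ (.biUnion (to_countable _) fun i _ => hMM.measurableSet_MMY i))
  have hle : ∀ M, T ⁻¹' E \ ⋃ i < M, MMY Xs i ≤ᵐ[m] T ⁻¹' G M := fun M => by
    filter_upwards [hMM.ae_mem_iUnion_MMY] with x hx ⟨hxE, hxM⟩
    obtain ⟨i, hi⟩ := mem_iUnion.1 hx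
    have hiM : M ≤ i := not_lt.1 fun h => hxM (mem_biUnion h hi)
    exact ⟨hEj hxE, x, mem_biUnion hiM hi, rfl⟩
  have hbound : ∀ M, mseqLim m T Xs lB (T ⁻¹' E \ ⋃ i < M, MMY Xs i) ≤ C * m.real (G M) :=
    fun M => (mseqLim_mono_ae hlB hMM.quasiMeasurePreserving
      (hMM.boundedSeq_mseq_preimage (hG M) inter_subset_left) (hle M)).trans
      ((hMM.mseqLim_preimage hlB (hG M) inter_subset_left).trans_le
        (hC _ (hG M) inter_subset_left))
  have hG0 : Tendsto (fun M => m.real (G M)) atTop (𝓝 0) := by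
    have himage := (ENNReal.tendsto_toReal ENNReal.zero_ne_top).comp hMM.cond6
    exact squeeze_zero (fun _ => measureReal_nonneg) (fun M => measureReal_mono inter_subset_right)
      himage
  refine hasSum_mseqLim_inter hlB hMM.quasiMeasurePreserving (hMM.measurable_T hE) hQb
    hMM.measurableSet_MMY pairwise_disjoint_MMY ?_
  refine squeeze_zero (fun M => mseqLim_nonneg hlB
    (hQb.mseq_of_ae_le hMM.quasiMeasurePreserving sdiff_subset.eventuallyLE)) hbound ?_
  simpa using hG0.const_mul C

theorem hasSum_mseqLim_inter_preimage_MMY {i : ℕ} {P : Set X} (hP : MeasurableSet P)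
    (hPi : P ⊆ Xs i) :
    HasSum (fun j => mseqLim m T Xs lB (P ∩ T ⁻¹' MMY Xs j)) (mseqLim m T Xs lB P) := by
  obtain ⟨C, hC⟩ := hMM.exists_mseqLim_le_mul_measureReal hlB i
  have hQb := hMM.boundedSeq_mseq hP hPi
  set G : ℕ → Set X := fun M => Xs i ∩ T ⁻¹' (⋃ j < M, MMY Xs j)ᶜ
  have hG : ∀ M, MeasurableSet (G M) := fun M => (hMM.meas_Xs i).inter (hMM.measurable_T
    (MeasurableSet.compl (.iUnion fun j => .iUnion fun _ => hMM.measurableSet_MMY j)))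
  have hsub : ∀ M, P \ ⋃ j < M, T ⁻¹' MMY Xs j ⊆ G M := fun M x ⟨hxP, hx⟩ =>
    ⟨hPi hxP, by simpa using hx⟩
  have hbound : ∀ M, mseqLim m T Xs lB (P \ ⋃ j < M, T ⁻¹' MMY Xs j) ≤ C * m.real (G M) :=
    fun M => (mseqLim_mono_ae hlB hMM.quasiMeasurePreserving
      (hMM.boundedSeq_mseq (hG M) inter_subset_left) (hsub M).eventuallyLE).trans
      (hC _ (hG M) inter_subset_left)
  have hG0 : Tendsto (fun M => m.real (G M)) atTop (𝓝 0) := by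
    have hanti : Antitone G := fun a b hab => inter_subset_inter_right _
      (preimage_mono (compl_subset_compl.2 fun x hx => by
        obtain ⟨j, hj, hxj⟩ := mem_iUnion₂.1 hx
        exact mem_iUnion₂.2 ⟨j, hj.trans_le hab, hxj⟩))
    have hInter : m (⋂ M, G M) = 0 := by
      refine measure_mono_null (fun x hx => ?_)
        (hMM.quasiMeasurePreserving.preimage_null (mem_ae_iff.1 hMM.ae_mem_iUnion_MMY))
      rintro ⟨j, ⟨j, rfl⟩, hxj⟩
      exact (mem_iInter.1 hx (j + 1)).2 (mem_iUnion₂.2 ⟨j, j.lt_succ_self, hxj⟩)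
    have hlim := tendsto_measure_iInter_atTop (fun M => (hG M).nullMeasurableSet) hanti
      ⟨0, measure_ne_top m _⟩
    rw [hInter] at hlim
    exact (ENNReal.tendsto_toReal ENNReal.zero_ne_top).comp hlim
  refine hasSum_mseqLim_inter hlB hMM.quasiMeasurePreserving hP hQb
    (fun j => hMM.measurable_T (hMM.measurableSet_MMY j))
    (fun a b hab => (pairwise_disjoint_MMY hab).preimage T) ?_
  refine squeeze_zero (fun M => mseqLim_nonneg hlB
    (hQb.mseq_of_ae_le hMM.quasiMeasurePreserving sdiff_subset.eventuallyLE)) hbound ?_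
  simpa using hG0.const_mul C

end MarcoMartens

/-- For a Marco–Martens map and a Banach limit `lB`, the set function
`μ(A) := Σ_{j=0}^∞ lB((m_n(A ∩ Y_j))_{n ≥ 1})` is `T`-invariant: `μ(T⁻¹(A)) = μ(A)` for
every measurable `A ⊆ X`. -/
theorem stmt13 {X : Type*} [MeasurableSpace X] (m : Measure X) [IsProbabilityMeasure m]
    (T : X → X) (Xs : ℕ → Set X) (K : ℕ → ℝ) (hMM : MarcoMartens m T Xs K)
    (lB : (ℕ → ℝ) → ℝ) (hlB : IsBanachLimit lB) :
    ∀ A : Set X, MeasurableSet A →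
      MMmu m T Xs lB (T ⁻¹' A) = MMmu m T Xs lB A := by
  intro A hA
  rw [MMmu_eq_tsum_mseqLim, MMmu_eq_tsum_mseqLim]
  have hY := hMM.measurableSet_MMY
  have hcell : ∀ i j, T ⁻¹' A ∩ MMY Xs i ∩ T ⁻¹' MMY Xs j = T ⁻¹' (A ∩ MMY Xs j) ∩ MMY Xs i :=
    fun i j => by rw [preimage_inter, inter_right_comm]
  have hrow : ∀ i, HasSum (fun j => mseqLim m T Xs lB (T ⁻¹' A ∩ MMY Xs i ∩ T ⁻¹' MMY Xs j))
      (mseqLim m T Xs lB (T ⁻¹' A ∩ MMY Xs i)) := fun i =>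
    hMM.hasSum_mseqLim_inter_preimage_MMY hlB ((hMM.measurable_T hA).inter (hY i))
      (inter_subset_right.trans MMY_subset)
  have hcol : ∀ j, HasSum (fun i => mseqLim m T Xs lB (T ⁻¹' A ∩ MMY Xs i ∩ T ⁻¹' MMY Xs j))
      (mseqLim m T Xs lB (A ∩ MMY Xs j)) := fun j => by
    have hAj : A ∩ MMY Xs j ⊆ Xs j := inter_subset_right.trans MMY_subset
    simp only [hcell]
    rw [← hMM.mseqLim_preimage hlB (hA.inter (hY j)) hAj]
    exact hMM.hasSum_mseqLim_preimage_inter_MMY hlB (hA.inter (hY j)) hAj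
  have hnonneg : ∀ i j, 0 ≤ mseqLim m T Xs lB (T ⁻¹' A ∩ MMY Xs i ∩ T ⁻¹' MMY Xs j) :=
    fun i j => mseqLim_nonneg hlB (hMM.boundedSeq_mseq
      (((hMM.measurable_T hA).inter (hY i)).inter (hMM.measurable_T (hY j)))
      (inter_subset_left.trans (inter_subset_right.trans MMY_subset)))
  exact tsum_eq_tsum_of_hasSum_row_col hnonneg hrow hcol
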